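/- arXiv:1112.2351 — 2 statements merged into one kernel-verified Lean document; each statement's English description precedes it below -/
import Mathlib

section
/- Let p, r : [0,1] → ℝ be continuous with p(x) > 0 and r(x) > 0 for all x ∈ [0,1], and let λ > 0. If y₁ and y₂ are nontrivial classical solutions of (p·y'')'' = λ·r·y on [0,1] both satisfying y(0) = y'(0) = y(1) = y'(1) = 0, then y₁ and y₂ are linearly dependent (i.e. the positive eigenvalue λ has geometric multiplicity 1). -/
open Set

/-- Derivative within the interval `[0,1]`. -/
noncomputable def Dv (y : ℝ → ℝ) : ℝ → ℝ := derivWithin y (Set.Icc 0 1)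

/-- `y` is not identically zero on `[0,1]`. -/
def Nontriv (y : ℝ → ℝ) : Prop := ∃ x ∈ Set.Icc (0:ℝ) 1, y x ≠ 0

/-- `y` is a classical solution of `(p y'')'' = lam * r * y` on `[0,1]`. -/
def SolS (p r : ℝ → ℝ) (lam : ℝ) (y : ℝ → ℝ) : Prop :=
  ContDiffOn ℝ 2 y (Set.Icc 0 1) ∧
  ContDiffOn ℝ 2 (fun x => p x * Dv (Dv y) x) (Set.Icc 0 1) ∧
  ∀ x ∈ Set.Icc (0:ℝ) 1,
    Dv (Dv (fun t => p t * Dv (Dv y) t)) x = lam * (r x * y x)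

/-- Clamped boundary conditions `y(0) = y'(0) = y(1) = y'(1) = 0`. -/
def BC1 (y : ℝ → ℝ) : Prop := y 0 = 0 ∧ Dv y 0 = 0 ∧ y 1 = 0 ∧ Dv y 1 = 0

/-- Boundary conditions `y(0) = y'(0) = y'(1) = 0`, `(p y'')'(1) + lam * alpha * y(1) = 0`. -/
def BC2S (p : ℝ → ℝ) (lam alpha : ℝ) (y : ℝ → ℝ) : Prop :=
  y 0 = 0 ∧ Dv y 0 = 0 ∧ Dv y 1 = 0 ∧
  Dv (fun t => p t * Dv (Dv y) t) 1 + lam * alpha * y 1 = 0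

/-- Linear dependence of two functions on `[0,1]`. -/
def LinDep (y₁ y₂ : ℝ → ℝ) : Prop :=
  ∃ a b : ℝ, (a ≠ 0 ∨ b ≠ 0) ∧ ∀ x ∈ Set.Icc (0:ℝ) 1, a * y₁ x + b * y₂ x = 0

/-! Subtracting a suitable multiple of `y₂` from a multiple of `y₁` gives a solution `u` with
`u(0) = u'(0) = u''(0) = u(1) = 0`, whose only free Cauchy datum at `0` is the shear
`c = (p u'')'(0)`. If `c > 0`, then as long as `(p u'')' > 0` the quantities `p u''`, `u''`, `u'`
and `u` are positive, so `(p u'')'' = λ r u > 0` and `(p u'')'` stays above `c`; hence all of them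
stay positive on `(0, 1]`, contradicting `u(1) = 0`. The case `c < 0` follows by replacing `u`
with `-u`. Finally `c = 0` means that `(u, u', p u'', (p u'')')` solves a linear first-order system
with bounded coefficients and zero initial value, so `u ≡ 0` by Grönwall's inequality. -/

noncomputable def moment (p y : ℝ → ℝ) : ℝ → ℝ := fun t => p t * Dv (Dv y) t

lemma solS_iff {p r : ℝ → ℝ} {lam : ℝ} {y : ℝ → ℝ} :
    SolS p r lam y ↔ ContDiffOn ℝ 2 y (Icc 0 1) ∧ ContDiffOn ℝ 2 (moment p y) (Icc 0 1) ∧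
      ∀ x ∈ Icc (0:ℝ) 1, Dv (Dv (moment p y)) x = lam * (r x * y x) :=
  Iff.rfl

section Derivatives

variable {f g : ℝ → ℝ}

lemma Dv_eq_deriv {x : ℝ} (hx : x ∈ Ioo 0 1) : Dv f x = deriv f x :=
  derivWithin_of_mem_nhds (Icc_mem_nhds hx.1 hx.2)

lemma Dv_congr (h : EqOn f g (Icc 0 1)) : EqOn (Dv f) (Dv g) (Icc 0 1) :=
  fun _ hx => derivWithin_congr h (h hx)

lemma Dv_smul (c : ℝ) (f : ℝ → ℝ) : Dv (c • f) = c • Dv f :=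
  funext fun _ => derivWithin_const_smul_field c f

lemma Dv_add (hf : DifferentiableOn ℝ f (Icc 0 1)) (hg : DifferentiableOn ℝ g (Icc 0 1)) :
    EqOn (Dv (f + g)) (Dv f + Dv g) (Icc 0 1) :=
  fun x hx => derivWithin_add (hf x hx) (hg x hx)

lemma ContDiffOn.contDiffOn_Dv (hf : ContDiffOn ℝ 2 f (Icc 0 1)) :
    ContDiffOn ℝ 1 (Dv f) (Icc 0 1) :=
  hf.derivWithin (uniqueDiffOn_Icc one_pos) le_rfl

lemma ContDiffOn.continuousOn_Dv (hf : ContDiffOn ℝ 2 f (Icc 0 1)) :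
    ContinuousOn (Dv f) (Icc 0 1) :=
  hf.contDiffOn_Dv.continuousOn

lemma Dv_Dv_add (hf : ContDiffOn ℝ 2 f (Icc 0 1)) (hg : ContDiffOn ℝ 2 g (Icc 0 1)) :
    EqOn (Dv (Dv (f + g))) (Dv (Dv f) + Dv (Dv g)) (Icc 0 1) := by
  have h1 := Dv_add (hf.differentiableOn two_ne_zero) (hg.differentiableOn two_ne_zero)
  have h2 := Dv_add (hf.contDiffOn_Dv.differentiableOn one_ne_zero)
    (hg.contDiffOn_Dv.differentiableOn one_ne_zero)
  exact fun x hx => (Dv_congr h1 hx).trans (h2 hx)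

lemma hasDerivWithinAt_Ici_Dv (hf : DifferentiableOn ℝ f (Icc 0 1)) {t : ℝ} (ht : t ∈ Ico 0 1) :
    HasDerivWithinAt f (Dv f t) (Ici t) t :=
  (hf t (Ico_subset_Icc_self ht)).hasDerivWithinAt.mono_of_mem_nhdsWithin
    (Icc_mem_nhdsGE_of_mem ht)

lemma strictMonoOn_of_Dv_pos {a b : ℝ} (ha : 0 ≤ a) (hb : b ≤ 1)
    (hf : ContinuousOn f (Icc a b)) (hd : ∀ x ∈ Ioo a b, 0 < Dv f x) :
    StrictMonoOn f (Icc a b) := by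
  refine strictMonoOn_of_deriv_pos (convex_Icc a b) hf fun x hx => ?_
  rw [interior_Icc] at hx
  rw [← Dv_eq_deriv ⟨ha.trans_lt hx.1, hx.2.trans_le hb⟩]
  exact hd x hx

lemma pos_of_Dv_pos {T : ℝ} (hT : T ≤ 1) (hf : ContinuousOn f (Icc 0 T)) (h0 : f 0 = 0)
    (hd : ∀ x ∈ Ioo 0 T, 0 < Dv f x) : ∀ x ∈ Ioc 0 T, 0 < f x := by
  intro x hx
  have := strictMonoOn_of_Dv_pos le_rfl hT hf hd (left_mem_Icc.2 (hx.1.le.trans hx.2))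
    (Ioc_subset_Icc_self hx) hx.1
  rwa [h0] at this

end Derivatives

section Solutions

variable {p r : ℝ → ℝ} {lam : ℝ} {u y₁ y₂ : ℝ → ℝ}

lemma moment_smul (c : ℝ) (y : ℝ → ℝ) : moment p (c • y) = c • moment p y := by
  funext t
  simp only [moment, Dv_smul, Pi.smul_apply, smul_eq_mul]
  ring

lemma moment_add (h₁ : ContDiffOn ℝ 2 y₁ (Icc 0 1)) (h₂ : ContDiffOn ℝ 2 y₂ (Icc 0 1)) :
    EqOn (moment p (y₁ + y₂)) (moment p y₁ + moment p y₂) (Icc 0 1) := by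
  intro t ht
  simp only [moment, Dv_Dv_add h₁ h₂ ht, Pi.add_apply]
  ring

lemma SolS.smul (hsol : SolS p r lam u) (c : ℝ) : SolS p r lam (c • u) := by
  obtain ⟨hu, hM, heq⟩ := solS_iff.mp hsol
  refine solS_iff.mpr ⟨hu.const_smul c, ?_, fun x hx => ?_⟩
  · rw [moment_smul]
    exact hM.const_smul c
  · simp only [moment_smul, Dv_smul, Pi.smul_apply, smul_eq_mul, heq x hx]
    ring

lemma SolS.add (h₁ : SolS p r lam y₁) (h₂ : SolS p r lam y₂) : SolS p r lam (y₁ + y₂) := by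
  obtain ⟨hy₁, hM₁, heq₁⟩ := solS_iff.mp h₁
  obtain ⟨hy₂, hM₂, heq₂⟩ := solS_iff.mp h₂
  have hM := moment_add (p := p) hy₁ hy₂
  refine solS_iff.mpr ⟨hy₁.add hy₂, (hM₁.add hM₂).congr hM, fun x hx => ?_⟩
  rw [Dv_congr (Dv_congr hM) hx, Dv_Dv_add hM₁ hM₂ hx, Pi.add_apply, heq₁ x hx, heq₂ x hx,
    Pi.add_apply]
  ring

lemma pos_of_Dv_moment_pos (hp : ∀ x ∈ Icc (0:ℝ) 1, 0 < p x) (hu : ContDiffOn ℝ 2 u (Icc 0 1))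
    (hM : ContDiffOn ℝ 2 (moment p u) (Icc 0 1)) (h0 : u 0 = 0) (h1 : Dv u 0 = 0)
    (h2 : Dv (Dv u) 0 = 0) {T : ℝ} (hT : T ≤ 1)
    (hd : ∀ x ∈ Ioo 0 T, 0 < Dv (moment p u) x) : ∀ x ∈ Ioc 0 T, 0 < u x := by
  have hsub : Icc 0 T ⊆ Icc (0:ℝ) 1 := Icc_subset_Icc_right hT
  have hMpos := pos_of_Dv_pos hT (hM.continuousOn.mono hsub) (by simp [moment, h2]) hd
  have hu'' : ∀ x ∈ Ioo 0 T, 0 < Dv (Dv u) x := fun x hx =>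
    pos_of_mul_pos_right (hMpos x (Ioo_subset_Ioc_self hx))
      (hp x (hsub (Ioo_subset_Icc_self hx))).le
  have hu' := pos_of_Dv_pos hT (hu.continuousOn_Dv.mono hsub) h1 hu''
  exact pos_of_Dv_pos hT (hu.continuousOn.mono hsub) h0 fun x hx => hu' x (Ioo_subset_Ioc_self hx)

lemma SolS.pos_at_one (hp : ∀ x ∈ Icc (0:ℝ) 1, 0 < p x) (hr : ∀ x ∈ Icc (0:ℝ) 1, 0 < r x)
    (hlam : 0 < lam) (hsol : SolS p r lam u) (h0 : u 0 = 0) (h1 : Dv u 0 = 0)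
    (h2 : Dv (Dv u) 0 = 0) (hc : 0 < Dv (moment p u) 0) : 0 < u 1 := by
  obtain ⟨hu, hM, heq⟩ := solS_iff.mp hsol
  have hM' := hM.continuousOn_Dv
  suffices hd : ∀ x ∈ Icc (0:ℝ) 1, 0 < Dv (moment p u) x from
    pos_of_Dv_moment_pos hp hu hM h0 h1 h2 le_rfl (fun x hx => hd x (Ioo_subset_Icc_self hx)) 1
      ⟨one_pos, le_rfl⟩
  by_contra! hneg
  -- the first point where the shear `(p u'')'` stops being positive
  have hS : IsCompact (Icc 0 1 ∩ Dv (moment p u) ⁻¹' Iic 0) :=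
    isCompact_Icc.of_isClosed_subset (hM'.preimage_isClosed_of_isClosed isClosed_Icc isClosed_Iic)
      inter_subset_left
  obtain ⟨T, ⟨hT, hTneg⟩, hTmin⟩ := hS.exists_isLeast hneg
  have hT0 : 0 < T := hT.1.lt_of_ne fun h => by subst h; exact (not_le.mpr hc) hTneg
  have hbefore : ∀ x ∈ Ioo 0 T, 0 < Dv (moment p u) x := fun x hx =>
    not_le.mp fun h => hx.2.not_ge (hTmin ⟨⟨hx.1.le, hx.2.le.trans hT.2⟩, h⟩)
  have hupos := pos_of_Dv_moment_pos hp hu hM h0 h1 h2 hT.2 hbefore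
  have hmono := strictMonoOn_of_Dv_pos le_rfl hT.2 (hM'.mono (Icc_subset_Icc_right hT.2))
    fun x hx => by
      rw [heq x ⟨hx.1.le, hx.2.le.trans hT.2⟩]
      have hrx := hr x ⟨hx.1.le, hx.2.le.trans hT.2⟩
      have hux := hupos x (Ioo_subset_Ioc_self hx)
      positivity
  have := hmono (left_mem_Icc.2 hT0.le) (right_mem_Icc.2 hT0.le) hT0
  exact (not_le.mpr (hc.trans this)) hTneg

noncomputable def state (p u : ℝ → ℝ) (t : ℝ) : ℝ × ℝ × ℝ × ℝ :=
  (u t, Dv u t, moment p u t, Dv (moment p u) t)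

lemma hasDerivWithinAt_state (hu : ContDiffOn ℝ 2 u (Icc 0 1))
    (hM : ContDiffOn ℝ 2 (moment p u) (Icc 0 1)) {t : ℝ} (ht : t ∈ Ico 0 1) :
    HasDerivWithinAt (state p u)
      (Dv u t, Dv (Dv u) t, Dv (moment p u) t, Dv (Dv (moment p u)) t) (Ici t) t :=
  (hasDerivWithinAt_Ici_Dv (hu.differentiableOn two_ne_zero) ht).prodMk
    ((hasDerivWithinAt_Ici_Dv (hu.contDiffOn_Dv.differentiableOn one_ne_zero) ht).prodMk
    ((hasDerivWithinAt_Ici_Dv (hM.differentiableOn two_ne_zero) ht).prodMk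
    (hasDerivWithinAt_Ici_Dv (hM.contDiffOn_Dv.differentiableOn one_ne_zero) ht)))

lemma SolS.exists_norm_deriv_state_le (hpc : ContinuousOn p (Icc 0 1))
    (hrc : ContinuousOn r (Icc 0 1)) (hp : ∀ x ∈ Icc (0:ℝ) 1, p x ≠ 0)
    (hsol : SolS p r lam u) : ∃ K, ∀ t ∈ Icc (0:ℝ) 1,
      ‖(Dv u t, Dv (Dv u) t, Dv (moment p u) t, Dv (Dv (moment p u)) t)‖ ≤ K * ‖state p u t‖ := by
  obtain ⟨Cp, hCp⟩ := isCompact_Icc.exists_bound_of_continuousOn (hpc.inv₀ hp)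
  obtain ⟨Cr, hCr⟩ := isCompact_Icc.exists_bound_of_continuousOn hrc
  set K := max 1 (max Cp (|lam| * Cr))
  have hK1 : 1 ≤ K := le_max_left _ _
  have hKp : Cp ≤ K := (le_max_left _ _).trans (le_max_right _ _)
  have hKr : |lam| * Cr ≤ K := (le_max_right _ _).trans (le_max_right _ _)
  refine ⟨K, fun t ht => ?_⟩
  set F := state p u t
  have hF0 := norm_nonneg F
  have hu_le : ‖u t‖ ≤ ‖F‖ := norm_fst_le F
  have hu'_le : ‖Dv u t‖ ≤ ‖F‖ := (norm_fst_le F.2).trans (norm_snd_le F)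
  have hM_le : ‖moment p u t‖ ≤ ‖F‖ :=
    ((norm_fst_le F.2.2).trans (norm_snd_le F.2)).trans (norm_snd_le F)
  have hM'_le : ‖Dv (moment p u) t‖ ≤ ‖F‖ :=
    ((norm_snd_le F.2.2).trans (norm_snd_le F.2)).trans (norm_snd_le F)
  refine max_le (hu'_le.trans (le_mul_of_one_le_left hF0 hK1)) (max_le ?_ (max_le
    (hM'_le.trans (le_mul_of_one_le_left hF0 hK1)) ?_))
  · calc ‖Dv (Dv u) t‖ = ‖(p t)⁻¹‖ * ‖moment p u t‖ := by
          rw [moment, ← norm_mul, inv_mul_cancel_left₀ (hp t ht)]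
      _ ≤ K * ‖F‖ :=
        mul_le_mul ((hCp t ht).trans hKp) hM_le (norm_nonneg _) (zero_le_one.trans hK1)
  · calc ‖Dv (Dv (moment p u)) t‖ = |lam| * ‖r t‖ * ‖u t‖ := by
          rw [(solS_iff.mp hsol).2.2 t ht, norm_mul, norm_mul, Real.norm_eq_abs lam, mul_assoc]
      _ ≤ K * ‖F‖ :=
        mul_le_mul ((mul_le_mul_of_nonneg_left (hCr t ht) (abs_nonneg lam)).trans hKr) hu_le
          (norm_nonneg _) (zero_le_one.trans hK1)

lemma SolS.eqOn_zero_of_initial (hpc : ContinuousOn p (Icc 0 1))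
    (hrc : ContinuousOn r (Icc 0 1)) (hp : ∀ x ∈ Icc (0:ℝ) 1, p x ≠ 0) (hsol : SolS p r lam u)
    (h0 : u 0 = 0) (h1 : Dv u 0 = 0) (h2 : Dv (Dv u) 0 = 0) (h3 : Dv (moment p u) 0 = 0) :
    EqOn u 0 (Icc 0 1) := by
  obtain ⟨hu, hM, -⟩ := solS_iff.mp hsol
  obtain ⟨K, hK⟩ := hsol.exists_norm_deriv_state_le hpc hrc hp
  have hcont : ContinuousOn (state p u) (Icc 0 1) :=
    hu.continuousOn.prodMk (hu.continuousOn_Dv.prodMk (hM.continuousOn.prodMk hM.continuousOn_Dv))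
  have hzero := eq_zero_of_abs_deriv_le_mul_abs_self_of_eq_zero_right hcont
    (fun t ht => hasDerivWithinAt_state hu hM ht) (by simp [state, h0, h1, moment, h2, h3])
    (fun t ht => hK t (Ico_subset_Icc_self ht))
  exact fun x hx => congrArg Prod.fst (hzero x hx)

lemma SolS.eqOn_zero_of_Dv_Dv_zero (hpc : ContinuousOn p (Icc 0 1))
    (hrc : ContinuousOn r (Icc 0 1)) (hp : ∀ x ∈ Icc (0:ℝ) 1, 0 < p x)
    (hr : ∀ x ∈ Icc (0:ℝ) 1, 0 < r x) (hlam : 0 < lam) (hsol : SolS p r lam u) (h0 : u 0 = 0)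
    (h1 : Dv u 0 = 0) (h2 : Dv (Dv u) 0 = 0) (h3 : u 1 = 0) : EqOn u 0 (Icc 0 1) := by
  rcases lt_trichotomy (Dv (moment p u) 0) 0 with hc | hc | hc
  · have := (hsol.smul (-1)).pos_at_one hp hr hlam (by simp [h0])
      (by rw [Dv_smul, Pi.smul_apply, h1, smul_zero])
      (by rw [Dv_smul, Dv_smul, Pi.smul_apply, h2, smul_zero])
      (by rw [moment_smul, Dv_smul, Pi.smul_apply, smul_eq_mul]; linarith)
    simp [h3] at this
  · exact hsol.eqOn_zero_of_initial hpc hrc (fun x hx => (hp x hx).ne') h0 h1 h2 hc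
  · exact absurd h3 (hsol.pos_at_one hp hr hlam h0 h1 h2 hc).ne'

end Solutions

theorem stmt_3_general (p r : ℝ → ℝ) (lam : ℝ)
    (hpc : ContinuousOn p (Icc 0 1)) (hrc : ContinuousOn r (Icc 0 1))
    (hp : ∀ x ∈ Icc (0:ℝ) 1, 0 < p x) (hr : ∀ x ∈ Icc (0:ℝ) 1, 0 < r x)
    (hlam : 0 < lam) (y₁ y₂ : ℝ → ℝ)
    (hy₁ : SolS p r lam y₁) (hbc₁ : BC1 y₁)
    (hy₂ : SolS p r lam y₂) (hbc₂ : BC1 y₂) :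
    LinDep y₁ y₂ := by
  obtain ⟨h₁0, h₁d, h₁1, -⟩ := hbc₁
  obtain ⟨h₂0, h₂d, h₂1, -⟩ := hbc₂
  have h0 : (0:ℝ) ∈ Icc 0 1 := left_mem_Icc.2 zero_le_one
  by_cases hc₂ : Dv (Dv y₂) 0 = 0
  · refine ⟨0, 1, Or.inr one_ne_zero, fun x hx => ?_⟩
    simpa using hy₂.eqOn_zero_of_Dv_Dv_zero hpc hrc hp hr hlam h₂0 h₂d hc₂ h₂1 hx
  · set a := Dv (Dv y₂) 0
    set b := -Dv (Dv y₁) 0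
    have hv₁ := (hy₁.smul a).1
    have hv₂ := (hy₂.smul b).1
    refine ⟨a, b, Or.inl hc₂, fun x hx => ?_⟩
    have hu := ((hy₁.smul a).add (hy₂.smul b)).eqOn_zero_of_Dv_Dv_zero hpc hrc hp hr hlam
      (by simp [h₁0, h₂0])
      (by rw [Dv_add (hv₁.differentiableOn two_ne_zero) (hv₂.differentiableOn two_ne_zero) h0]
          simp [Dv_smul, h₁d, h₂d])
      (by rw [Dv_Dv_add hv₁ hv₂ h0]
          simp only [Pi.add_apply, Dv_smul, Pi.smul_apply, smul_eq_mul, a, b]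
          ring)
      (by simp [h₁1, h₂1])
    simpa using hu hx

theorem stmt_3 (p r : ℝ → ℝ) (lam : ℝ)
    (hpc : ContinuousOn p (Icc 0 1)) (hrc : ContinuousOn r (Icc 0 1))
    (hp : ∀ x ∈ Icc (0:ℝ) 1, 0 < p x) (hr : ∀ x ∈ Icc (0:ℝ) 1, 0 < r x)
    (hlam : 0 < lam) (y₁ y₂ : ℝ → ℝ)
    (hy₁ : SolS p r lam y₁) (hnt₁ : Nontriv y₁) (hbc₁ : BC1 y₁)
    (hy₂ : SolS p r lam y₂) (hnt₂ : Nontriv y₂) (hbc₂ : BC1 y₂) :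
    LinDep y₁ y₂ :=
  stmt_3_general p r lam hpc hrc hp hr hlam y₁ y₂ hy₁ hbc₁ hy₂ hbc₂
end

section
/- Let p, r : [0,1] → ℝ be continuous with p(x) > 0 and r(x) > 0 for all x ∈ [0,1], and let λ > 0. Let y be a nontrivial classical solution of (p·y'')'' = λ·r·y on [0,1] satisfying y(0) = y'(0) = y'(1) = 0. Then every zero of y in the open interval (0,1) is simple: if a ∈ (0,1) and y(a) = 0, then y'(a) ≠ 0. -/
open Set

/-!
Write the equation as the first-order system `Y' = Y₁`, `Y₁' = Z / P`, `Z' = Z₁`, `Z₁' = Q Y`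
with `P = p > 0`, `Q = λ r ≥ 0`. The system is cooperative: if `Y = Y₁ = 0` and `Z, Z₁ ≥ 0`,
not both zero, at a point, then `Z` stays positive to the right (it is pushed up by
`Z₁' = Q Y ≥ 0` as long as `Y ≥ 0`), hence so do `Y₁` and `Y`.

Let `y(a) = y'(a) = 0`. If also `Z(a) = Z₁(a) = 0`, Grönwall's inequality forces `y ≡ 0`.
Otherwise, replacing `y` by `-y`, take `Z(a) ≥ 0`. If `Z₁(a) ≥ 0`, positivity to the right
gives `y'(1) > 0`; if `Z₁(a) < 0`, the same argument run leftwards from `a` (reflecting the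
interval flips the signs of `Y₁` and `Z₁`) gives `y(0) > 0`. Either contradicts the boundary
conditions.
-/

theorem monotoneOn_Icc_of_hasDerivWithinAt_nonneg {f f' : ℝ → ℝ} {α β : ℝ}
    (hf : ∀ x ∈ Icc α β, HasDerivWithinAt f (f' x) (Icc α β) x)
    (hf' : ∀ x ∈ Ioo α β, 0 ≤ f' x) : MonotoneOn f (Icc α β) :=
  monotoneOn_of_hasDerivWithinAt_nonneg (convex_Icc α β)
    (fun x hx => (hf x hx).continuousWithinAt)
    (fun x hx => by
      rw [interior_Icc] at hx ⊢
      exact (hf x (Ioo_subset_Icc_self hx)).mono Ioo_subset_Icc_self)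
    (by rwa [interior_Icc])

theorem strictMonoOn_Icc_of_hasDerivWithinAt_pos {f f' : ℝ → ℝ} {α β : ℝ}
    (hf : ∀ x ∈ Icc α β, HasDerivWithinAt f (f' x) (Icc α β) x)
    (hf' : ∀ x ∈ Ioo α β, 0 < f' x) : StrictMonoOn f (Icc α β) :=
  strictMonoOn_of_hasDerivWithinAt_pos (convex_Icc α β)
    (fun x hx => (hf x hx).continuousWithinAt)
    (fun x hx => by
      rw [interior_Icc] at hx ⊢
      exact (hf x (Ioo_subset_Icc_self hx)).mono Ioo_subset_Icc_self)
    (by rwa [interior_Icc])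

theorem left_le_of_hasDerivWithinAt_nonneg {f f' : ℝ → ℝ} {α β : ℝ}
    (hf : ∀ x ∈ Icc α β, HasDerivWithinAt f (f' x) (Icc α β) x)
    (hf' : ∀ x ∈ Ioo α β, 0 ≤ f' x) {x : ℝ} (hx : x ∈ Icc α β) : f α ≤ f x :=
  monotoneOn_Icc_of_hasDerivWithinAt_nonneg hf hf' (left_mem_Icc.2 (hx.1.trans hx.2)) hx hx.1

theorem left_lt_of_hasDerivWithinAt_pos {f f' : ℝ → ℝ} {α β : ℝ}
    (hf : ∀ x ∈ Icc α β, HasDerivWithinAt f (f' x) (Icc α β) x)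
    (hf' : ∀ x ∈ Ioo α β, 0 < f' x) {x : ℝ} (hx : x ∈ Ioc α β) : f α < f x :=
  strictMonoOn_Icc_of_hasDerivWithinAt_pos hf hf' (left_mem_Icc.2 (hx.1.le.trans hx.2))
    (Ioc_subset_Icc_self hx) hx.1

theorem exists_forall_Icc_pos_of_continuousWithinAt {f : ℝ → ℝ} {α β : ℝ} (hαβ : α < β)
    (hf : ContinuousWithinAt f (Icc α β) α) (hfα : 0 < f α) :
    ∃ γ ∈ Ioc α β, ∀ t ∈ Icc α γ, 0 < f t := by
  have hev : ∀ᶠ t in nhdsWithin α (Ici α), 0 < f t := by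
    rw [← nhdsWithin_Icc_eq_nhdsGE hαβ]
    exact hf.eventually (lt_mem_nhds hfα)
  obtain ⟨u, hu, hsub⟩ := mem_nhdsGE_iff_exists_Icc_subset.1 hev
  exact ⟨min u β, ⟨lt_min hu hαβ, min_le_right _ _⟩,
    fun t ht => hsub ⟨ht.1, ht.2.trans (min_le_left _ _)⟩⟩

theorem add_sub_mem_Icc {α β t : ℝ} (ht : t ∈ Icc α β) : α + β - t ∈ Icc α β :=
  ⟨by linarith [ht.2], by linarith [ht.1]⟩

theorem hasDerivWithinAt_reflect {f f' : ℝ → ℝ} {α β : ℝ}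
    (hf : ∀ x ∈ Icc α β, HasDerivWithinAt f (f' x) (Icc α β) x) :
    ∀ x ∈ Icc α β,
      HasDerivWithinAt (fun t => f (α + β - t)) (-f' (α + β - x)) (Icc α β) x := by
  have hmaps : MapsTo (fun t => α + β - t) (Icc α β) (Icc α β) := fun _ => add_sub_mem_Icc
  intro x hx
  have h := (hf _ (hmaps hx)).comp x ((hasDerivWithinAt_id x _).const_sub (α + β)) hmaps
  rw [mul_neg_one] at h
  exact h

/-- The equation `(P Y'')'' = Q Y` as a first-order system in `Y`, `Y₁ = Y'`, `Z = P Y''`,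
`Z₁ = Z'`. -/
structure BeamSystem (P Q Y Y₁ Z Z₁ : ℝ → ℝ) (s : Set ℝ) : Prop where
  hasDerivWithinAt_Y : ∀ x ∈ s, HasDerivWithinAt Y (Y₁ x) s x
  hasDerivWithinAt_Y₁ : ∀ x ∈ s, HasDerivWithinAt Y₁ (Z x / P x) s x
  hasDerivWithinAt_Z : ∀ x ∈ s, HasDerivWithinAt Z (Z₁ x) s x
  hasDerivWithinAt_Z₁ : ∀ x ∈ s, HasDerivWithinAt Z₁ (Q x * Y x) s x

namespace BeamSystem

variable {P Q Y Y₁ Z Z₁ : ℝ → ℝ}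

theorem mono {s t : Set ℝ} (h : BeamSystem P Q Y Y₁ Z Z₁ s) (hts : t ⊆ s) :
    BeamSystem P Q Y Y₁ Z Z₁ t where
  hasDerivWithinAt_Y x hx := (h.hasDerivWithinAt_Y x (hts hx)).mono hts
  hasDerivWithinAt_Y₁ x hx := (h.hasDerivWithinAt_Y₁ x (hts hx)).mono hts
  hasDerivWithinAt_Z x hx := (h.hasDerivWithinAt_Z x (hts hx)).mono hts
  hasDerivWithinAt_Z₁ x hx := (h.hasDerivWithinAt_Z₁ x (hts hx)).mono hts

theorem neg {s : Set ℝ} (h : BeamSystem P Q Y Y₁ Z Z₁ s) :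
    BeamSystem P Q (-Y) (-Y₁) (-Z) (-Z₁) s where
  hasDerivWithinAt_Y x hx := (h.hasDerivWithinAt_Y x hx).neg
  hasDerivWithinAt_Y₁ x hx := by simpa [neg_div] using (h.hasDerivWithinAt_Y₁ x hx).neg
  hasDerivWithinAt_Z x hx := (h.hasDerivWithinAt_Z x hx).neg
  hasDerivWithinAt_Z₁ x hx := by simpa using (h.hasDerivWithinAt_Z₁ x hx).neg

theorem reflect {α β : ℝ} (h : BeamSystem P Q Y Y₁ Z Z₁ (Icc α β)) :
    BeamSystem (fun x => P (α + β - x)) (fun x => Q (α + β - x)) (fun x => Y (α + β - x))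
      (fun x => -Y₁ (α + β - x)) (fun x => Z (α + β - x)) (fun x => -Z₁ (α + β - x))
      (Icc α β) where
  hasDerivWithinAt_Y := hasDerivWithinAt_reflect h.hasDerivWithinAt_Y
  hasDerivWithinAt_Y₁ x hx := by
    simpa using (hasDerivWithinAt_reflect h.hasDerivWithinAt_Y₁ x hx).fun_neg
  hasDerivWithinAt_Z := hasDerivWithinAt_reflect h.hasDerivWithinAt_Z
  hasDerivWithinAt_Z₁ x hx := by
    simpa using (hasDerivWithinAt_reflect h.hasDerivWithinAt_Z₁ x hx).fun_neg

variable {α β : ℝ}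

theorem exists_Z_pos_near_left (h : BeamSystem P Q Y Y₁ Z Z₁ (Icc α β)) (hαβ : α < β)
    (hZ : 0 ≤ Z α) (hstart : 0 < Z α ∨ 0 < Z₁ α) :
    ∃ γ ∈ Ioc α β, ∀ t ∈ Ioc α γ, 0 < Z t := by
  have hα : α ∈ Icc α β := left_mem_Icc.2 hαβ.le
  rcases hstart with hZα | hZ₁α
  · obtain ⟨γ, hγ, hpos⟩ := exists_forall_Icc_pos_of_continuousWithinAt hαβ
      (h.hasDerivWithinAt_Z α hα).continuousWithinAt hZα
    exact ⟨γ, hγ, fun t ht => hpos t (Ioc_subset_Icc_self ht)⟩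
  · obtain ⟨γ, hγ, hpos⟩ := exists_forall_Icc_pos_of_continuousWithinAt hαβ
      (h.hasDerivWithinAt_Z₁ α hα).continuousWithinAt hZ₁α
    refine ⟨γ, hγ, fun t ht => hZ.trans_lt ?_⟩
    exact left_lt_of_hasDerivWithinAt_pos (h.mono (Icc_subset_Icc_right hγ.2)).hasDerivWithinAt_Z
      (fun u hu => hpos u (Ioo_subset_Icc_self hu)) ht

theorem monotoneOn_Z (h : BeamSystem P Q Y Y₁ Z Z₁ (Icc α β))
    (hP : ∀ x ∈ Icc α β, 0 < P x) (hQ : ∀ x ∈ Icc α β, 0 ≤ Q x)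
    (hY : Y α = 0) (hY₁ : Y₁ α = 0) (hZ₁ : 0 ≤ Z₁ α) (hZpos : ∀ t ∈ Ioo α β, 0 < Z t) :
    MonotoneOn Z (Icc α β) := by
  have hY₁nn : ∀ t ∈ Icc α β, 0 ≤ Y₁ t := fun t ht =>
    hY₁.ge.trans <| left_le_of_hasDerivWithinAt_nonneg h.hasDerivWithinAt_Y₁
      (fun u hu => (div_pos (hZpos u hu) (hP u (Ioo_subset_Icc_self hu))).le) ht
  have hYnn : ∀ t ∈ Icc α β, 0 ≤ Y t := fun t ht =>
    hY.ge.trans <| left_le_of_hasDerivWithinAt_nonneg h.hasDerivWithinAt_Y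
      (fun u hu => hY₁nn u (Ioo_subset_Icc_self hu)) ht
  have hZ₁nn : ∀ t ∈ Icc α β, 0 ≤ Z₁ t := fun t ht =>
    hZ₁.trans <| left_le_of_hasDerivWithinAt_nonneg h.hasDerivWithinAt_Z₁
      (fun u hu => mul_nonneg (hQ u (Ioo_subset_Icc_self hu)) (hYnn u (Ioo_subset_Icc_self hu))) ht
  exact monotoneOn_Icc_of_hasDerivWithinAt_nonneg h.hasDerivWithinAt_Z
    (fun u hu => hZ₁nn u (Ioo_subset_Icc_self hu))

theorem Z_pos_of_initial (h : BeamSystem P Q Y Y₁ Z Z₁ (Icc α β))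
    (hP : ∀ x ∈ Icc α β, 0 < P x) (hQ : ∀ x ∈ Icc α β, 0 ≤ Q x) (hαβ : α < β)
    (hY : Y α = 0) (hY₁ : Y₁ α = 0) (hZ : 0 ≤ Z α) (hZ₁ : 0 ≤ Z₁ α)
    (hstart : 0 < Z α ∨ 0 < Z₁ α) : ∀ t ∈ Ioc α β, 0 < Z t := by
  obtain ⟨γ, hγ, hZγ⟩ := h.exists_Z_pos_near_left hαβ hZ hstart
  by_contra! hbad
  obtain ⟨t₀, ht₀, hZt₀⟩ := hbad
  have hZc : ContinuousOn Z (Icc γ β) := fun x hx =>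
    ((h.mono (Icc_subset_Icc_left hγ.1.le)).hasDerivWithinAt_Z x hx).continuousWithinAt
  have hclosed : IsClosed (Icc γ β ∩ Z ⁻¹' Iic 0) :=
    hZc.preimage_isClosed_of_isClosed isClosed_Icc isClosed_Iic
  have ht₀γ : γ < t₀ := lt_of_not_ge fun ht => (hZγ t₀ ⟨ht₀.1, ht⟩).not_ge hZt₀
  -- the first point of `[γ, β]` where `Z` fails to be positive
  obtain ⟨b, ⟨hbI, hZb⟩, hbmin⟩ := (isCompact_Icc.of_isClosed_subset hclosed
    inter_subset_left).exists_isLeast ⟨t₀, ⟨ht₀γ.le, ht₀.2⟩, hZt₀⟩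
  have hZpos : ∀ t ∈ Ioo α b, 0 < Z t := by
    intro t ht
    rcases le_or_gt t γ with htγ | hγt
    · exact hZγ t ⟨ht.1, htγ⟩
    · exact lt_of_not_ge fun hZt => (hbmin ⟨⟨hγt.le, ht.2.le.trans hbI.2⟩, hZt⟩).not_gt ht.2
  have hmono := (h.mono (Icc_subset_Icc_right hbI.2)).monotoneOn_Z
    (fun x hx => hP x ⟨hx.1, hx.2.trans hbI.2⟩) (fun x hx => hQ x ⟨hx.1, hx.2.trans hbI.2⟩)
    hY hY₁ hZ₁ hZpos
  have hαb : α ≤ b := hγ.1.le.trans hbI.1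
  exact (hZγ γ ⟨hγ.1, le_rfl⟩).not_ge
    ((hmono ⟨hγ.1.le, hbI.1⟩ ⟨hαb, le_rfl⟩ hbI.1).trans hZb)

theorem pos_of_initial (h : BeamSystem P Q Y Y₁ Z Z₁ (Icc α β))
    (hP : ∀ x ∈ Icc α β, 0 < P x) (hQ : ∀ x ∈ Icc α β, 0 ≤ Q x) (hαβ : α < β)
    (hY : Y α = 0) (hY₁ : Y₁ α = 0) (hZ : 0 ≤ Z α) (hZ₁ : 0 ≤ Z₁ α)
    (hstart : 0 < Z α ∨ 0 < Z₁ α) : 0 < Y β ∧ 0 < Y₁ β := by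
  have hZpos := h.Z_pos_of_initial hP hQ hαβ hY hY₁ hZ hZ₁ hstart
  have hY₁pos : ∀ t ∈ Ioc α β, 0 < Y₁ t := fun t ht =>
    hY₁.ge.trans_lt <| left_lt_of_hasDerivWithinAt_pos h.hasDerivWithinAt_Y₁
      (fun u hu => div_pos (hZpos u (Ioo_subset_Ioc_self hu)) (hP u (Ioo_subset_Icc_self hu))) ht
  have hβ : β ∈ Ioc α β := ⟨hαβ, le_rfl⟩
  exact ⟨hY.ge.trans_lt <| left_lt_of_hasDerivWithinAt_pos h.hasDerivWithinAt_Y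
    (fun u hu => hY₁pos u (Ioo_subset_Ioc_self hu)) hβ, hY₁pos β hβ⟩

theorem eq_zero_of_initial (h : BeamSystem P Q Y Y₁ Z Z₁ (Icc α β)) {K₁ K₂ : ℝ}
    (hP : ∀ x ∈ Icc α β, ‖(P x)⁻¹‖ ≤ K₁) (hQ : ∀ x ∈ Icc α β, ‖Q x‖ ≤ K₂)
    (hY : Y α = 0) (hY₁ : Y₁ α = 0) (hZ : Z α = 0) (hZ₁ : Z₁ α = 0) :
    ∀ x ∈ Icc α β, Y x = 0 := by
  set U : ℝ → ℝ × ℝ × ℝ × ℝ := fun x => (Y x, Y₁ x, Z x, Z₁ x)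
  set K := max 1 (max K₁ K₂)
  have hU : ∀ x ∈ Icc α β,
      HasDerivWithinAt U (Y₁ x, Z x / P x, Z₁ x, Q x * Y x) (Icc α β) x := fun x hx =>
    (h.hasDerivWithinAt_Y x hx).prodMk ((h.hasDerivWithinAt_Y₁ x hx).prodMk
      ((h.hasDerivWithinAt_Z x hx).prodMk (h.hasDerivWithinAt_Z₁ x hx)))
  have hbound : ∀ x ∈ Ico α β, ‖(Y₁ x, Z x / P x, Z₁ x, Q x * Y x)‖ ≤ K * ‖U x‖ := by
    intro x hx
    have hN : 0 ≤ ‖U x‖ := norm_nonneg _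
    have hY : ‖Y x‖ ≤ ‖U x‖ := norm_fst_le (U x)
    have hY₁ : ‖Y₁ x‖ ≤ ‖U x‖ := (norm_fst_le _).trans (norm_snd_le (U x))
    have hZ : ‖Z x‖ ≤ ‖U x‖ := (norm_fst_le _).trans ((norm_snd_le _).trans (norm_snd_le (U x)))
    have hZ₁ : ‖Z₁ x‖ ≤ ‖U x‖ := (norm_snd_le _).trans ((norm_snd_le _).trans (norm_snd_le (U x)))
    have hK1 : 1 ≤ K := le_max_left _ _
    have hKP : ‖(P x)⁻¹‖ ≤ K := (hP x (Ico_subset_Icc_self hx)).trans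
      ((le_max_left _ _).trans (le_max_right _ _))
    have hKQ : ‖Q x‖ ≤ K := (hQ x (Ico_subset_Icc_self hx)).trans
      ((le_max_right _ _).trans (le_max_right _ _))
    simp only [norm_prod_le_iff, div_eq_mul_inv, norm_mul]
    refine ⟨hY₁.trans (le_mul_of_one_le_left hN hK1), ?_,
      hZ₁.trans (le_mul_of_one_le_left hN hK1), ?_⟩
    · rw [mul_comm K]
      exact mul_le_mul hZ hKP (norm_nonneg _) hN
    · exact mul_le_mul hKQ hY (norm_nonneg _) (zero_le_one.trans hK1)
  have hUzero := eq_zero_of_abs_deriv_le_mul_abs_self_of_eq_zero_right (f := U)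
    (fun x hx => (hU x hx).continuousWithinAt)
    (fun x hx => (hU x (Ico_subset_Icc_self hx)).mono_of_mem_nhdsWithin (Icc_mem_nhdsGE_of_mem hx))
    (by simp [U, hY, hY₁, hZ, hZ₁]) hbound
  exact fun x hx => congrArg Prod.fst (hUzero x hx)

theorem eq_zero_of_eq_zero_at (h : BeamSystem P Q Y Y₁ Z Z₁ (Icc α β)) {K₁ K₂ : ℝ}
    (hP : ∀ x ∈ Icc α β, ‖(P x)⁻¹‖ ≤ K₁) (hQ : ∀ x ∈ Icc α β, ‖Q x‖ ≤ K₂) {c : ℝ}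
    (hc : c ∈ Icc α β) (hY : Y c = 0) (hY₁ : Y₁ c = 0) (hZ : Z c = 0) (hZ₁ : Z₁ c = 0) :
    ∀ x ∈ Icc α β, Y x = 0 := by
  intro x hx
  rcases le_total c x with hcx | hxc
  · have hsub : Icc c β ⊆ Icc α β := Icc_subset_Icc_left hc.1
    exact (h.mono hsub).eq_zero_of_initial (fun t ht => hP t (hsub ht))
      (fun t ht => hQ t (hsub ht)) hY hY₁ hZ hZ₁ x ⟨hcx, hx.2⟩
  · have hsub : Icc α c ⊆ Icc α β := Icc_subset_Icc_right hc.2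
    have hreflect := (h.mono hsub).reflect.eq_zero_of_initial
      (fun t ht => hP _ (hsub (add_sub_mem_Icc ht))) (fun t ht => hQ _ (hsub (add_sub_mem_Icc ht)))
      (by simpa using hY) (by simp [hY₁]) (by simpa using hZ) (by simp [hZ₁])
      (α + c - x) (add_sub_mem_Icc ⟨hx.1, hxc⟩)
    simpa using hreflect

theorem Z_eq_zero_of_double_zero (h : BeamSystem P Q Y Y₁ Z Z₁ (Icc α β))
    (hP : ∀ x ∈ Icc α β, 0 < P x) (hQ : ∀ x ∈ Icc α β, 0 ≤ Q x) {a : ℝ} (ha : a ∈ Ioo α β)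
    (hYα : Y α = 0) (hY₁β : Y₁ β = 0) (hY : Y a = 0) (hY₁ : Y₁ a = 0) :
    Z a = 0 ∧ Z₁ a = 0 := by
  wlog hZ : 0 ≤ Z a generalizing Y Y₁ Z Z₁
  · simpa using this h.neg (by simp [hYα]) (by simp [hY₁β]) (by simp [hY]) (by simp [hY₁])
      (by simp only [Pi.neg_apply, neg_nonneg]; exact (not_le.1 hZ).le)
  by_contra hne
  rcases le_or_gt 0 (Z₁ a) with hZ₁ | hZ₁
  · have hstart : 0 < Z a ∨ 0 < Z₁ a := by
      by_contra! h0
      exact hne ⟨le_antisymm h0.1 hZ, le_antisymm h0.2 hZ₁⟩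
    have hsub : Icc a β ⊆ Icc α β := Icc_subset_Icc_left ha.1.le
    have hpos := (h.mono hsub).pos_of_initial (fun x hx => hP x (hsub hx))
      (fun x hx => hQ x (hsub hx)) ha.2 hY hY₁ hZ hZ₁ hstart
    exact hpos.2.ne' hY₁β
  · have hsub : Icc α a ⊆ Icc α β := Icc_subset_Icc_right ha.2.le
    have hpos := (h.mono hsub).reflect.pos_of_initial
      (fun x hx => hP _ (hsub (add_sub_mem_Icc hx))) (fun x hx => hQ _ (hsub (add_sub_mem_Icc hx)))
      ha.1 (by simpa using hY) (by simp [hY₁]) (by simpa using hZ)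
      (by simp only [add_sub_cancel_left, neg_nonneg]; exact hZ₁.le)
      (Or.inr (by simp only [add_sub_cancel_left, neg_pos]; exact hZ₁))
    simp only [add_sub_cancel_right] at hpos
    exact hpos.1.ne' hYα

end BeamSystem

theorem hasDerivWithinAt_Dv {f : ℝ → ℝ} {n : WithTop ℕ∞} (hf : ContDiffOn ℝ n f (Icc 0 1))
    (hn : n ≠ 0) : ∀ x ∈ Icc (0:ℝ) 1, HasDerivWithinAt f (Dv f x) (Icc 0 1) x := fun x hx =>
  (hf.differentiableOn hn x hx).hasDerivWithinAt

theorem SolS.beamSystem {p r : ℝ → ℝ} {lam : ℝ} {y : ℝ → ℝ} (hy : SolS p r lam y)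
    (hp : ∀ x ∈ Icc (0:ℝ) 1, p x ≠ 0) :
    BeamSystem p (fun x => lam * r x) y (Dv y) (fun x => p x * Dv (Dv y) x)
      (Dv fun x => p x * Dv (Dv y) x) (Icc 0 1) := by
  obtain ⟨hy, hZ, heq⟩ := hy
  have hUD : UniqueDiffOn ℝ (Icc (0:ℝ) 1) := uniqueDiffOn_Icc zero_lt_one
  refine ⟨hasDerivWithinAt_Dv hy two_ne_zero, fun x hx => ?_,
    hasDerivWithinAt_Dv hZ two_ne_zero, fun x hx => ?_⟩
  · rw [mul_div_cancel_left₀ _ (hp x hx)]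
    exact hasDerivWithinAt_Dv (hy.derivWithin hUD (by norm_num)) one_ne_zero x hx
  · rw [mul_assoc, ← heq x hx]
    exact hasDerivWithinAt_Dv (hZ.derivWithin hUD (by norm_num)) one_ne_zero x hx

theorem stmt_5 (p r : ℝ → ℝ) (lam : ℝ)
    (hpc : ContinuousOn p (Icc 0 1)) (hrc : ContinuousOn r (Icc 0 1))
    (hp : ∀ x ∈ Icc (0:ℝ) 1, 0 < p x) (hr : ∀ x ∈ Icc (0:ℝ) 1, 0 < r x)
    (hlam : 0 < lam) (y : ℝ → ℝ)
    (hy : SolS p r lam y) (hnt : Nontriv y)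
    (hbc : y 0 = 0 ∧ Dv y 0 = 0 ∧ Dv y 1 = 0)
    (a : ℝ) (ha : a ∈ Ioo (0:ℝ) 1) (hya : y a = 0) :
    Dv y a ≠ 0 := by
  intro hy'a
  have hp0 : ∀ x ∈ Icc (0:ℝ) 1, p x ≠ 0 := fun x hx => (hp x hx).ne'
  have hsys := hy.beamSystem hp0
  obtain ⟨hZa, hZ'a⟩ := hsys.Z_eq_zero_of_double_zero hp
    (fun x hx => (mul_pos hlam (hr x hx)).le) ha hbc.1 hbc.2.2 hya hy'a
  obtain ⟨K₁, hK₁⟩ := isCompact_Icc.exists_bound_of_continuousOn (hpc.inv₀ hp0)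
  obtain ⟨K₂, hK₂⟩ := isCompact_Icc.exists_bound_of_continuousOn (continuousOn_const.mul hrc)
  obtain ⟨x₀, hx₀, hyx₀⟩ := hnt
  exact hyx₀ (hsys.eq_zero_of_eq_zero_at hK₁ hK₂ (Ioo_subset_Icc_self ha) hya hy'a hZa hZ'a x₀ hx₀)
end
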